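/- For 0 < q ≤ 1 and integers r > 1, s ≥ 0, t ≥ 0, the quantity E_q^{k,ℓ}(r,s,t) satisfies E_q^{k,ℓ}(r,s,t) = Σ_{j=0}^{k-1} q^{(r-1)j} E_q^{k,ℓ}(r-1, s-j, t) + Σ_{j=k}^{s} q^{(r-1)j} E_q^{k,ℓ}(r-1, s-j, t - D(j)), where D(j) = ⌊(j-ℓ)/(k-ℓ)⌋ if j ≥ k and D(j) = 0 otherwise. -/

import Mathlib

open Finset

/-- `E_q^{k,ℓ}(r,s,t) = Σ q^(y₂+2y₃+⋯+(r-1)yᵣ)` over nonnegative tuples with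
`Σ yᵢ = s` and `Σ D(yᵢ) = t`, where `D(j) = ⌊(j-ℓ)/(k-ℓ)⌋` for `j ≥ k`, else `0`. -/
def Eqsum (q : ℝ) (k l r s t : ℕ) : ℝ :=
  ∑ y ∈ (Fintype.piFinset fun _ : Fin r => Finset.range (s + 1)).filter
      (fun y => (∑ i, y i) = s ∧ (∑ i, if k ≤ y i then (y i - l) / (k - l) else 0) = t),
    q ^ (∑ i : Fin r, (i : ℕ) * y i)

/-- `E_q^{k,ℓ}` with integer arguments, vanishing in degenerate (negative) cases. -/
def EqZ (q : ℝ) (k l r : ℕ) (s t : ℤ) : ℝ :=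
  if 0 ≤ s ∧ 0 ≤ t then Eqsum q k l r s.toNat t.toNat else 0

/-!
Conditioning on the last coordinate `y_r = j` of a tuple splits off the factor `q^((r-1)j)` and
`D(j)` runs; the remaining `r - 1` coordinates form exactly a tuple counted by
`E(r-1, s-j, t-D(j))`. Terms with `j > s` vanish, and `D(j) = 0` for `j < k`, which splits the
sum over `j ≤ s` into the two sums of the recurrence.
-/

-- `D(j)` of the paper.
def runCount (k l j : ℕ) : ℕ := if k ≤ j then (j - l) / (k - l) else 0

lemma runCount_of_lt {k l j : ℕ} (h : j < k) : runCount k l j = 0 := if_neg h.not_ge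

lemma intCast_runCount {k l : ℕ} (hlk : l ≤ k) (j : ℕ) :
    (runCount k l j : ℤ) = if (k : ℤ) ≤ j then ((j : ℤ) - l) / ((k : ℤ) - l) else 0 := by
  by_cases h : k ≤ j
  · simp [runCount, h, Nat.cast_sub hlk, Nat.cast_sub (hlk.trans h)]
  · simp [runCount, h]

section Tuples

variable (k l : ℕ)

abbrev runTuples (r s t : ℕ) : Finset (Fin r → ℕ) :=
  {y ∈ Fintype.piFinset fun _ ↦ range (s + 1) | ∑ i, y i = s ∧ ∑ i, runCount k l (y i) = t}

lemma Eqsum_eq_sum_runTuples (q : ℝ) (r s t : ℕ) :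
    Eqsum q k l r s t = ∑ y ∈ runTuples k l r s t, q ^ ∑ i : Fin r, (i : ℕ) * y i :=
  rfl

variable {k l}

lemma mem_runTuples {r s t : ℕ} {y : Fin r → ℕ} :
    y ∈ runTuples k l r s t ↔ ∑ i, y i = s ∧ ∑ i, runCount k l (y i) = t := by
  simp only [mem_filter, Fintype.mem_piFinset, mem_range, and_iff_right_iff_imp]
  rintro ⟨rfl, -⟩ i
  exact Nat.lt_succ_of_le (single_le_sum (fun _ _ ↦ Nat.zero_le _) (mem_univ i))

lemma snoc_mem_runTuples {m s t j : ℕ} {z : Fin m → ℕ} :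
    (Fin.snoc z j : Fin (m + 1) → ℕ) ∈ runTuples k l (m + 1) s t ↔
      j ≤ s ∧ runCount k l j ≤ t ∧ z ∈ runTuples k l m (s - j) (t - runCount k l j) := by
  simp only [mem_runTuples, Fin.sum_univ_castSucc, Fin.snoc_castSucc, Fin.snoc_last]
  omega

lemma Eqsum_succ (q : ℝ) (m s t : ℕ) :
    Eqsum q k l (m + 1) s t = ∑ j ∈ range (s + 1),
      if runCount k l j ≤ t then q ^ (m * j) * Eqsum q k l m (s - j) (t - runCount k l j)
      else 0 := by
  rw [Eqsum_eq_sum_runTuples, ← sum_fiberwise_of_maps_to (g := fun y ↦ y (Fin.last m))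
    (t := range (s + 1)) fun y hy ↦ Fintype.mem_piFinset.mp (mem_filter.mp hy).1 _]
  refine sum_congr rfl fun j hj ↦ ?_
  have snoc_init {y : Fin (m + 1) → ℕ} (hy : y (Fin.last m) = j) : Fin.snoc (Fin.init y) j = y :=
    hy ▸ Fin.snoc_init_self y
  split_ifs with hjt
  · rw [Eqsum_eq_sum_runTuples, mul_sum]
    refine sum_nbij' Fin.init (Fin.snoc · j) (fun y hy ↦ ?_) (fun z hz ↦ ?_) (fun y hy ↦ ?_)
      (fun z _ ↦ Fin.init_snoc _ _) (fun y hy ↦ ?_)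
    · rw [mem_filter, ← snoc_init hy.2, snoc_mem_runTuples] at hy
      exact hy.1.2.2
    · rw [mem_filter, snoc_mem_runTuples, Fin.snoc_last]
      exact ⟨⟨by simpa using hj, hjt, hz⟩, rfl⟩
    · exact snoc_init (mem_filter.mp hy).2
    · rw [← snoc_init (mem_filter.mp hy).2, Fin.sum_univ_castSucc, pow_add]
      simp [mul_comm]
  · refine sum_eq_zero fun y hy ↦ absurd ?_ hjt
    rw [mem_filter, ← snoc_init hy.2, snoc_mem_runTuples] at hy
    exact hy.1.2.1

end Tuples

lemma EqZ_natCast (q : ℝ) (k l r s t : ℕ) : EqZ q k l r s t = Eqsum q k l r s t := by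
  simp [EqZ]

lemma EqZ_of_neg (q : ℝ) (k l r : ℕ) {s : ℤ} (t : ℤ) (hs : s < 0) : EqZ q k l r s t = 0 :=
  if_neg fun h ↦ h.1.not_gt hs

lemma EqZ_natCast_sub (q : ℝ) (k l r : ℕ) {s j : ℕ} (t d : ℕ) (hj : j ≤ s) :
    EqZ q k l r ((s : ℤ) - j) ((t : ℤ) - d) =
      if d ≤ t then Eqsum q k l r (s - j) (t - d) else 0 := by
  rw [← Nat.cast_sub hj]
  split_ifs with hd
  · rw [← Nat.cast_sub hd, EqZ_natCast]
  · exact if_neg fun h ↦ hd (by omega)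

lemma EqZ_succ (q : ℝ) (k l m s t : ℕ) :
    EqZ q k l (m + 1) s t =
      ∑ j ∈ range (s + 1), q ^ (m * j) * EqZ q k l m ((s : ℤ) - j) ((t : ℤ) - runCount k l j) := by
  rw [EqZ_natCast, Eqsum_succ]
  refine sum_congr rfl fun j hj ↦ ?_
  rw [EqZ_natCast_sub _ _ _ _ _ _ (Nat.lt_succ_iff.mp (mem_range.mp hj)), mul_ite, mul_zero]

lemma sum_range_succ_eq_sum_range_add_sum_Icc {M : Type*} [AddCommMonoid M] {f : ℕ → M} {n : ℕ}
    (hf : ∀ j, n < j → f j = 0) (k : ℕ) :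
    ∑ j ∈ range (n + 1), f j = ∑ j ∈ range k, f j + ∑ j ∈ Icc k n, f j := by
  rcases le_or_gt k (n + 1) with hk | hk
  · rw [← Ico_add_one_right_eq_Icc, sum_range_add_sum_Ico f hk]
  · rw [Icc_eq_empty (by omega), sum_empty, add_zero]
    exact sum_subset (range_subset_range.2 hk.le) fun j _ hj ↦ hf j (by simpa using hj)

lemma Int.sum_Icc_natCast {M : Type*} [AddCommMonoid M] (f : ℤ → M) (a b : ℕ) :
    ∑ j ∈ Icc (a : ℤ) b, f j = ∑ j ∈ Icc a b, f j := by
  have : Icc (a : ℤ) b = (Icc a b).map Nat.castEmbedding :=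
    coe_injective (by simp [Nat.image_cast_int_Icc])
  rw [this, sum_map]
  rfl

theorem Eq_recurrence_general (q : ℝ) (k l r : ℕ) (hl : l < k)
    (hr : 1 < r) (s t : ℤ) (hs : 0 ≤ s) (ht : 0 ≤ t) :
    EqZ q k l r s t =
      (∑ j ∈ Finset.range k, q ^ ((r - 1) * j) * EqZ q k l (r - 1) (s - j) t) +
      ∑ j ∈ Finset.Icc (k : ℤ) s,
        q ^ ((((r : ℤ) - 1) * j).toNat) *
          EqZ q k l (r - 1) (s - j)
            (t - if (k : ℤ) ≤ j then (j - l) / ((k : ℤ) - l) else 0) := by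
  obtain ⟨m, rfl⟩ : ∃ m, r = m + 1 := ⟨r - 1, by omega⟩
  lift s to ℕ using hs
  lift t to ℕ using ht
  have vanish (j : ℕ) (hj : s < j) :
      q ^ (m * j) * EqZ q k l m ((s : ℤ) - j) ((t : ℤ) - runCount k l j) = 0 := by
    rw [EqZ_of_neg _ _ _ _ _ (by omega), mul_zero]
  rw [EqZ_succ, sum_range_succ_eq_sum_range_add_sum_Icc vanish k, Int.sum_Icc_natCast]
  congr 1 <;> refine sum_congr rfl fun j hj ↦ ?_
  · simp [runCount_of_lt (mem_range.mp hj)]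
  · rw [← intCast_runCount hl.le, Nat.add_sub_cancel,
      show (((m + 1 : ℕ) : ℤ) - 1) * j = (m * j : ℕ) by push_cast; ring, Int.toNat_natCast]

theorem Eq_recurrence (q : ℝ) (hq0 : 0 < q) (hq1 : q ≤ 1) (k l r : ℕ) (hl : l < k)
    (hr : 1 < r) (s t : ℤ) (hs : 0 ≤ s) (ht : 0 ≤ t) :
    EqZ q k l r s t =
      (∑ j ∈ Finset.range k, q ^ ((r - 1) * j) * EqZ q k l (r - 1) (s - j) t) +
      ∑ j ∈ Finset.Icc (k : ℤ) s,
        q ^ ((((r : ℤ) - 1) * j).toNat) *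
          EqZ q k l (r - 1) (s - j)
            (t - if (k : ℤ) ≤ j then (j - l) / ((k : ℤ) - l) else 0) :=
  Eq_recurrence_general q k l r hl hr s t hs ht
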